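/- arXiv:math/0602040 — 5 statements merged into one kernel-verified Lean document; each statement's English description precedes it below -/
import Mathlib

section
/- (Group-theoretic form of Theorem 1.) Let n ≥ 1, r ≥ 1, and let m_1,…,m_r and d_1,…,d_r be positive integers. Let A = (ℤ/m_1ℤ) ⊕ ⋯ ⊕ (ℤ/m_rℤ), x = (d_1 mod m_1, …, d_r mod m_r) ∈ A, and Q = A/⟨x⟩. Then the following are equivalent: (i) for every subset B ⊆ {1,…,r} with |B| ≤ n, the canonical homomorphism ⨁_{i∈B} ℤ/m_iℤ → Q (inclusion into A followed by the quotient projection) is injective; (ii) the tuple (f_1,…,f_r) satisfies the divisibility condition with parameter n, where f_i = m_i / gcd(m_i, d_i). -/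
/-!
The `i`-th coordinate of `x` has order `fᵢ`, so `z • x` lies in the image of `⨁_{i ∈ B} ℤ/mᵢℤ`
exactly when `fⱼ ∣ z` for all `j ∉ B`; hence injectivity on `B` means `fᵢ ∣ lcm_{j ∉ B} fⱼ` for
all `i ∈ B`. Checked one prime power `p^k ∣ fᵢ` at a time, this asks for some `j ∉ B` with
`p^k ∣ fⱼ`, which holds for every `B ∋ i` of size at most `n` exactly when at least `n` indices
`j ≠ i` have `p^k ∣ fⱼ`.
-/

/-- The extension-by-zero homomorphism `⨁_{i ∈ B} ℤ/mᵢℤ → ⨁_{i} ℤ/mᵢℤ`. -/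
def extendByZero {r : ℕ} (m : Fin r → ℕ) (B : Finset (Fin r)) :
    ((i : {x // x ∈ B}) → ZMod (m i.1)) →+ ((i : Fin r) → ZMod (m i)) where
  toFun y i := if h : i ∈ B then y ⟨i, h⟩ else 0
  map_zero' := by funext i; by_cases h : i ∈ B <;> simp [h]
  map_add' a b := by funext i; by_cases h : i ∈ B <;> simp [h]

/-- `(f₁, …, f_r)` satisfies the divisibility condition with parameter `n`: for every
prime `p`, every `k ≥ 1` and every index `i`, if `p^k ∣ fᵢ` then `p^k` divides `f_j`
for at least `n` indices `j ≠ i`. -/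
def DivisibilityCondition {r : ℕ} (f : Fin r → ℕ) (n : ℕ) : Prop :=
  ∀ p : ℕ, p.Prime → ∀ k : ℕ, 1 ≤ k → ∀ i : Fin r, p ^ k ∣ f i →
    n ≤ (Finset.univ.filter (fun j : Fin r => j ≠ i ∧ p ^ k ∣ f j)).card

open Finset

theorem Nat.Prime.pow_dvd_finset_lcm_iff {ι : Type*} {s : Finset ι} {f : ι → ℕ}
    (hf : ∀ j ∈ s, f j ≠ 0) {p k : ℕ} (hp : p.Prime) (hk : k ≠ 0) :
    p ^ k ∣ s.lcm f ↔ ∃ j ∈ s, p ^ k ∣ f j := by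
  rw [hp.pow_dvd_iff_le_factorization (Finset.lcm_ne_zero_iff.mpr hf),
    Finset.factorization_lcm hf, Finset.le_sup_iff (Nat.pos_of_ne_zero hk)]
  exact exists_congr fun j =>
    and_congr_right fun hj => (hp.pow_dvd_iff_le_factorization (hf j hj)).symm

theorem Finset.dvd_lcm_iff_forall_int_dvd {ι : Type*} {s : Finset ι} {f : ι → ℕ} {a : ℕ} :
    a ∣ s.lcm f ↔ ∀ z : ℤ, (∀ j ∈ s, (f j : ℤ) ∣ z) → (a : ℤ) ∣ z := by
  refine ⟨fun h z hz => Int.natCast_dvd.mpr (h.trans (Finset.lcm_dvd fun j hj =>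
    Int.natCast_dvd.mp (hz j hj))), fun h => Int.natCast_dvd_natCast.mp ?_⟩
  exact h _ fun j hj => Int.natCast_dvd_natCast.mpr (Finset.dvd_lcm hj)

section extendByZero

variable {r : ℕ} {m : Fin r → ℕ} {B : Finset (Fin r)}

theorem extendByZero_eq_iff (y : (i : {x // x ∈ B}) → ZMod (m i.1))
    (v : (i : Fin r) → ZMod (m i)) :
    extendByZero m B y = v ↔ (∀ i ∉ B, v i = 0) ∧ ∀ i : {x // x ∈ B}, y i = v i := by
  constructor
  · rintro rfl
    exact ⟨fun i hi => by simp [extendByZero, hi], fun i => by simp [extendByZero]⟩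
  · rintro ⟨hout, hin⟩
    funext i
    by_cases hi : i ∈ B
    · simpa [extendByZero, hi] using hin ⟨i, hi⟩
    · simpa [extendByZero, hi] using (hout i hi).symm

theorem injective_mk_comp_extendByZero_iff (x : (i : Fin r) → ZMod (m i)) :
    Function.Injective
        ((QuotientAddGroup.mk' (AddSubgroup.zmultiples x)).comp (extendByZero m B)) ↔
      ∀ z : ℤ, (∀ i ∉ B, z • x i = 0) → ∀ i ∈ B, z • x i = 0 := by
  simp only [injective_iff_map_eq_zero, AddMonoidHom.comp_apply, QuotientAddGroup.mk'_apply,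
    QuotientAddGroup.eq_zero_iff, AddSubgroup.mem_zmultiples_iff]
  constructor
  · intro H z hz i hi
    have hext : extendByZero m B (fun j => z • x j.1) = z • x :=
      (extendByZero_eq_iff _ _).mpr ⟨hz, fun _ => rfl⟩
    exact congrFun (H _ ⟨z, hext.symm⟩) ⟨i, hi⟩
  · rintro H y ⟨z, hz⟩
    obtain ⟨hout, hin⟩ := (extendByZero_eq_iff y (z • x)).mp hz.symm
    funext i
    exact (hin i).trans (H z hout i.1 i.2)

end extendByZero

section DivisibilityCondition

variable {r n : ℕ} {f : Fin r → ℕ}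

theorem divisibilityCondition_of_dvd_lcm_compl (hf : ∀ j, f j ≠ 0)
    (H : ∀ B : Finset (Fin r), #B ≤ n → ∀ i ∈ B, f i ∣ Bᶜ.lcm f) :
    DivisibilityCondition f n := by
  intro p hp k hk i hpk
  by_contra! hS
  set S := univ.filter fun j : Fin r => j ≠ i ∧ p ^ k ∣ f j
  have hB : #(insert i S) ≤ n := (card_insert_le i S).trans hS
  obtain ⟨j, hj, hpj⟩ := (hp.pow_dvd_finset_lcm_iff (fun j _ => hf j) (by omega)).mp
    (hpk.trans (H _ hB i (mem_insert_self i S)))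
  simp only [S, mem_compl, mem_insert, mem_filter, mem_univ, true_and] at hj
  tauto

theorem dvd_lcm_compl_of_divisibilityCondition (hdc : DivisibilityCondition f n)
    {B : Finset (Fin r)} (hB : #B ≤ n) {i : Fin r} (hi : i ∈ B) : f i ∣ Bᶜ.lcm f := by
  refine (Nat.dvd_iff_prime_pow_dvd_dvd _ _).mpr fun p k hp hpk => ?_
  obtain rfl | hk := Nat.eq_zero_or_pos k
  · exact (pow_zero p).symm ▸ one_dvd _
  set S := univ.filter fun j : Fin r => j ≠ i ∧ p ^ k ∣ f j
  obtain ⟨j, hjS, hjB⟩ : ∃ j ∈ S, j ∉ B := by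
    by_contra! hSB
    have hsub : S ⊆ B.erase i := fun j hj =>
      mem_erase.mpr ⟨(mem_filter.mp hj).2.1, hSB j hj⟩
    have hcard := (hdc p hp k hk i hpk).trans (card_le_card hsub)
    rw [card_erase_of_mem hi] at hcard
    have hBpos := card_pos.mpr ⟨i, hi⟩
    omega
  exact (mem_filter.mp hjS).2.2.trans (Finset.dvd_lcm (mem_compl.mpr hjB))

theorem forall_dvd_lcm_compl_iff_divisibilityCondition (hf : ∀ j, f j ≠ 0) :
    (∀ B : Finset (Fin r), #B ≤ n → ∀ i ∈ B, f i ∣ Bᶜ.lcm f) ↔ DivisibilityCondition f n :=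
  ⟨divisibilityCondition_of_dvd_lcm_compl hf,
    fun hdc _ hB _ hi => dvd_lcm_compl_of_divisibilityCondition hdc hB hi⟩

end DivisibilityCondition

theorem abelian_uniformization_injectivity_iff_divisibility_general
    (n r : ℕ) (m d : Fin r → ℕ)
    (hm : ∀ i, 0 < m i) :
    (∀ B : Finset (Fin r), B.card ≤ n →
      Function.Injective
        ((QuotientAddGroup.mk'
            (AddSubgroup.zmultiples (fun i : Fin r => (d i : ZMod (m i))))).comp
          (extendByZero m B))) ↔
    DivisibilityCondition (fun i : Fin r => m i / Nat.gcd (m i) (d i)) n := by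
  have hord (i : Fin r) : addOrderOf (d i : ZMod (m i)) = m i / (m i).gcd (d i) :=
    ZMod.addOrderOf_coe (d i) (hm i).ne'
  have hf (i : Fin r) : m i / (m i).gcd (d i) ≠ 0 :=
    (Nat.div_pos (Nat.gcd_le_left _ (hm i)) (Nat.gcd_pos_of_pos_left _ (hm i))).ne'
  rw [← forall_dvd_lcm_compl_iff_divisibilityCondition hf]
  refine forall₂_congr fun B _ => ?_
  simp only [injective_mk_comp_extendByZero_iff, ← addOrderOf_dvd_iff_zsmul_eq_zero, hord,
    Finset.dvd_lcm_iff_forall_int_dvd, mem_compl]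
  exact ⟨fun h i hi z hz => h z hz i hi, fun h z hz i hi => h i hi z hz⟩

/-- Group-theoretic form of Theorem 1: with `A = ⨁ᵢ ℤ/mᵢℤ`, `x = (dᵢ mod mᵢ)ᵢ` and
`Q = A/⟨x⟩`, the canonical homomorphism `⨁_{i ∈ B} ℤ/mᵢℤ → Q` is injective for every
`B` with `|B| ≤ n` iff `(f₁, …, f_r)` with `fᵢ = mᵢ / gcd(mᵢ, dᵢ)` satisfies the
divisibility condition with parameter `n`. -/
theorem abelian_uniformization_injectivity_iff_divisibility
    (n r : ℕ) (hn : 1 ≤ n) (hr : 1 ≤ r) (m d : Fin r → ℕ)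
    (hm : ∀ i, 0 < m i) (hd : ∀ i, 0 < d i) :
    (∀ B : Finset (Fin r), B.card ≤ n →
      Function.Injective
        ((QuotientAddGroup.mk'
            (AddSubgroup.zmultiples (fun i : Fin r => (d i : ZMod (m i))))).comp
          (extendByZero m B))) ↔
    DivisibilityCondition (fun i : Fin r => m i / Nat.gcd (m i) (d i)) n :=
  abelian_uniformization_injectivity_iff_divisibility_general n r m d hm
end

section
/- Let r ≥ 1, let m_1,…,m_r and d_1,…,d_r be positive integers, let A = (ℤ/m_1ℤ) ⊕ ⋯ ⊕ (ℤ/m_rℤ), x = (d_1 mod m_1, …, d_r mod m_r) ∈ A, and Q = A/⟨x⟩. For any subset B ⊆ {1,…,r}, the canonical homomorphism ι_B : ⨁_{i∈B} ℤ/m_iℤ → Q (inclusion into A followed by the projection) is injective if and only if lcm{f_i : i ∈ {1,…,r}} = lcm{f_i : i ∉ B}, where f_i = m_i / gcd(m_i, d_i). -/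
/-- With `A = ⨁ᵢ ℤ/mᵢℤ`, `x = (dᵢ mod mᵢ)ᵢ` and `Q = A/⟨x⟩`, the canonical
homomorphism `ι_B : ⨁_{i ∈ B} ℤ/mᵢℤ → Q` is injective iff
`lcm {fᵢ : i ∈ [1,r]} = lcm {fᵢ : i ∉ B}` where `fᵢ = mᵢ / gcd(mᵢ, dᵢ)`. -/
theorem injective_iff_lcm_eq
    (r : ℕ) (hr : 1 ≤ r) (m d : Fin r → ℕ)
    (hm : ∀ i, 0 < m i) (hd : ∀ i, 0 < d i) (B : Finset (Fin r)) :
    Function.Injective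
        ((QuotientAddGroup.mk'
            (AddSubgroup.zmultiples (fun i : Fin r => (d i : ZMod (m i))))).comp
          (extendByZero m B)) ↔
      Finset.univ.lcm (fun i : Fin r => m i / Nat.gcd (m i) (d i)) =
        Bᶜ.lcm (fun i : Fin r => m i / Nat.gcd (m i) (d i)) := by
  classical
  set x : (i : Fin r) → ZMod (m i) := fun i => (d i : ZMod (m i)) with hx
  set f : Fin r → ℕ := fun i => m i / Nat.gcd (m i) (d i) with hf
  have hodi : ∀ (i : Fin r) (k : ℤ), k • ((d i : ZMod (m i))) = 0 ↔ (f i : ℤ) ∣ k := by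
    intro i k
    haveI : NeZero (m i) := ⟨(hm i).ne'⟩
    rw [← addOrderOf_dvd_iff_zsmul_eq_zero, ZMod.addOrderOf_coe]
    exact (hm i).ne'
  have natdvd : ∀ (n : ℕ) (k : ℤ), (n : ℤ) ∣ k ↔ n ∣ k.natAbs := by
    intro n k
    rw [← Int.natCast_dvd_natCast, Int.dvd_natAbs]
  have hdvd : ∀ (s : Finset (Fin r)) (k : ℤ),
      ((s.lcm f : ℕ) : ℤ) ∣ k ↔ ∀ i ∈ s, (f i : ℤ) ∣ k := by
    intro s k
    rw [natdvd]
    constructor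
    · intro h i hi
      rw [natdvd]; exact (Finset.dvd_lcm hi).trans h
    · intro h
      exact Finset.lcm_dvd fun i hi => (natdvd _ _).mp (h i hi)
  have hL'L : Bᶜ.lcm f ∣ Finset.univ.lcm f :=
    Finset.lcm_dvd fun i _ => Finset.dvd_lcm (Finset.mem_univ i)
  rw [injective_iff_map_eq_zero]
  constructor
  · intro hinj
    refine Nat.dvd_antisymm ?_ hL'L
    set k : ℤ := ((Bᶜ.lcm f : ℕ) : ℤ) with hk
    set y : (i : {x // x ∈ B}) → ZMod (m i.1) := fun i => k • (d i.1 : ZMod (m i.1)) with hy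
    have hyx : extendByZero m B y = k • x := by
      funext i
      show (if h : i ∈ B then y ⟨i, h⟩ else 0) = k • x i
      by_cases h : i ∈ B
      · simp [h, hy, hx]
      · have hdk : (f i : ℤ) ∣ k :=
          Int.natCast_dvd_natCast.mpr (Finset.dvd_lcm (Finset.mem_compl.mpr h))
        simp only [h, dif_neg, not_false_iff]
        exact ((hodi i k).mpr hdk).symm
    have h0 : ((QuotientAddGroup.mk' (AddSubgroup.zmultiples x)).comp (extendByZero m B)) y = 0 := by
      rw [AddMonoidHom.comp_apply, QuotientAddGroup.mk'_apply, QuotientAddGroup.eq_zero_iff, hyx]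
      exact AddSubgroup.mem_zmultiples_iff.mpr ⟨k, rfl⟩
    have hy0 : y = 0 := hinj y h0
    rw [← Int.natCast_dvd_natCast, ← hk, hdvd]
    intro i _
    by_cases h : i ∈ B
    · have : y ⟨i, h⟩ = 0 := by rw [hy0]; rfl
      exact (hodi i k).mp this
    · exact Int.natCast_dvd_natCast.mpr (Finset.dvd_lcm (Finset.mem_compl.mpr h))
  · intro hL y hy
    rw [AddMonoidHom.comp_apply, QuotientAddGroup.mk'_apply, QuotientAddGroup.eq_zero_iff,
      AddSubgroup.mem_zmultiples_iff] at hy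
    obtain ⟨k, hk⟩ := hy
    have hout : ∀ i ∈ Bᶜ, (f i : ℤ) ∣ k := by
      intro i hi
      have h' : i ∉ B := Finset.mem_compl.mp hi
      have hcomp := congrFun hk i
      have : k • (d i : ZMod (m i)) = 0 := by
        have h2 : k • x i = (if h : i ∈ B then y ⟨i, h⟩ else 0) := hcomp
        rw [dif_neg h'] at h2
        exact h2
      exact (hodi i k).mp this
    have hkall : ∀ i, (f i : ℤ) ∣ k := by
      intro i
      have hLk : ((Finset.univ.lcm f : ℕ) : ℤ) ∣ k := by
        rw [hL]; exact (hdvd _ _).mpr hout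
      exact dvd_trans (Int.natCast_dvd_natCast.mpr (Finset.dvd_lcm (Finset.mem_univ i))) hLk
    funext i
    have hcomp := congrFun hk i.1
    have h2 : k • x i.1 = (if h : i.1 ∈ B then y ⟨i.1, h⟩ else 0) := hcomp
    rw [dif_pos i.2] at h2
    have hz : k • x i.1 = 0 := (hodi i.1 k).mpr (hkall i.1)
    have : y ⟨i.1, i.2⟩ = 0 := by rw [← h2, hz]
    simpa using this
end

section
/- Let f_1,…,f_r be positive integers and let n be an integer with 0 ≤ n ≤ r. Then the following are equivalent: (i) for every subset B ⊆ {1,…,r} with |B| = n one has lcm{f_i : i ∉ B} = lcm{f_i : i ∈ {1,…,r}}; (ii) the tuple (f_1,…,f_r) satisfies the divisibility condition with parameter n. -/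
private lemma pow_dvd_lcm_pair {p k a b : ℕ} (hp : p.Prime) (ha : a ≠ 0) (hb : b ≠ 0)
    (h : p ^ k ∣ Nat.lcm a b) : p ^ k ∣ a ∨ p ^ k ∣ b := by
  have hl : Nat.lcm a b ≠ 0 := Nat.lcm_ne_zero ha hb
  rw [hp.pow_dvd_iff_le_factorization hl, Nat.factorization_lcm ha hb,
    Finsupp.sup_apply, le_sup_iff] at h
  rcases h with h | h
  · exact Or.inl ((hp.pow_dvd_iff_le_factorization ha).2 h)
  · exact Or.inr ((hp.pow_dvd_iff_le_factorization hb).2 h)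

private lemma exists_pow_dvd_of_pow_dvd_lcm {r : ℕ} {f : Fin r → ℕ} (hf : ∀ i, 0 < f i)
    {p k : ℕ} (hp : p.Prime) (hk : 1 ≤ k) {s : Finset (Fin r)}
    (h : p ^ k ∣ s.lcm f) : ∃ i ∈ s, p ^ k ∣ f i := by
  induction s using Finset.induction with
  | empty =>
    simp only [Finset.lcm_empty, Nat.dvd_one] at h
    exact absurd h (Nat.one_lt_pow (by omega) hp.one_lt).ne'
  | @insert a s _ ih =>
    rw [Finset.lcm_insert] at h
    have hs : s.lcm f ≠ 0 := by
      simp only [ne_eq, Finset.lcm_eq_zero_iff, Set.mem_image]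
      rintro ⟨i, _, hi⟩
      exact (hf i).ne' hi
    rcases pow_dvd_lcm_pair hp (hf a).ne' hs h with h | h
    · exact ⟨a, Finset.mem_insert_self a s, h⟩
    · obtain ⟨i, hi, hdvd⟩ := ih h
      exact ⟨i, Finset.mem_insert_of_mem hi, hdvd⟩

/-- `lcm {fᵢ : i ∉ B} = lcm {fᵢ : all i}` holds for every subset `B` of cardinality
exactly `n` iff `(f₁, …, f_r)` satisfies the divisibility condition with
parameter `n`. -/
theorem lcm_complement_eq_iff_divisibility
    (r n : ℕ) (hn : n ≤ r) (f : Fin r → ℕ) (hf : ∀ i, 0 < f i) :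
    (∀ B : Finset (Fin r), B.card = n → Bᶜ.lcm f = Finset.univ.lcm f) ↔
      DivisibilityCondition f n := by
  constructor
  · intro h p hp k hk i hdvd
    by_contra hlt
    push_neg at hlt
    set S := Finset.univ.filter (fun j : Fin r => j ≠ i ∧ p ^ k ∣ f j) with hS
    set T := Finset.univ.filter (fun j : Fin r => p ^ k ∣ f j) with hT
    have hTS : T ⊆ insert i S := by
      intro j hj
      rw [hT, Finset.mem_filter] at hj
      rcases eq_or_ne j i with rfl | hji
      · exact Finset.mem_insert_self _ _
      · exact Finset.mem_insert_of_mem (by simp [hS, hji, hj.2])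
    have hTcard : T.card ≤ n := by
      calc T.card ≤ (insert i S).card := Finset.card_le_card hTS
        _ ≤ S.card + 1 := Finset.card_insert_le _ _
        _ ≤ n := by omega
    obtain ⟨B, hTB, _, hBcard⟩ := Finset.exists_subsuperset_card_eq (Finset.subset_univ T)
      hTcard (by simpa using hn)
    have heq := h B hBcard
    have : p ^ k ∣ Bᶜ.lcm f := heq ▸ hdvd.trans (Finset.dvd_lcm (Finset.mem_univ i))
    obtain ⟨j, hj, hjd⟩ := exists_pow_dvd_of_pow_dvd_lcm hf hp hk this
    have hjT : j ∈ T := by simp [hT, hjd]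
    rw [Finset.mem_compl] at hj
    exact hj (hTB hjT)
  · intro h B hBcard
    refine Nat.dvd_antisymm
      (Finset.lcm_dvd fun i _ => Finset.dvd_lcm (Finset.mem_univ i)) ?_
    rw [Nat.dvd_iff_prime_pow_dvd_dvd]
    intro p k hp hdvd
    rcases Nat.eq_zero_or_pos k with rfl | hk
    · simp
    obtain ⟨i, _, hi⟩ := exists_pow_dvd_of_pow_dvd_lcm hf hp hk hdvd
    have hcard := h p hp k hk i hi
    set S := Finset.univ.filter (fun j : Fin r => j ≠ i ∧ p ^ k ∣ f j) with hS
    have hiS : i ∉ S := by simp [hS]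
    have : ¬ insert i S ⊆ B := by
      intro hsub
      have := Finset.card_le_card hsub
      rw [Finset.card_insert_of_notMem hiS, hBcard] at this
      omega
    obtain ⟨j, hjmem, hjB⟩ := Finset.not_subset.1 this
    have hjd : p ^ k ∣ f j := by
      rcases Finset.mem_insert.1 hjmem with rfl | hjS
      · exact hi
      · exact (Finset.mem_filter.1 hjS).2.2
    exact hjd.trans (Finset.dvd_lcm (Finset.mem_compl.2 hjB))
end

section
/- Define e : ℕ × ℕ → ℤ by e(0, n) = n + 1 for all n ≥ 0, e(r, 0) = 1 for all r ≥ 1, and e(r, n) = e(r−1, n) − e(r−1, n−1) for all r ≥ 1 and n ≥ 1. Then for all r, n ≥ 0, e(r, n) = (−1)^n · binom(r − 2, n), where binom(m, n) for m ∈ ℤ, n ∈ ℕ denotes the generalized binomial coefficient m(m−1)⋯(m−n+1)/n!. (Here e(r, n) is the Euler number of the complement of r hyperplanes in general position in ℙ^n.) -/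
/-- The Euler number `e(r, n)` of the complement of `r` hyperplanes in general
position in `ℙⁿ`: `e(0, n) = n + 1`, `e(r, 0) = 1` for `r ≥ 1`, and
`e(r, n) = e(r − 1, n) − e(r − 1, n − 1)` for `r, n ≥ 1`. -/
def eulerComplement : ℕ → ℕ → ℤ
  | 0, n => n + 1
  | _ + 1, 0 => 1
  | r + 1, n + 1 => eulerComplement r (n + 1) - eulerComplement r n

lemma ringChoose_neg_one (k : ℕ) : Ring.choose (-1 : ℤ) k = (-1) ^ k := by
  induction k with
  | zero => simp [Ring.choose_zero_right]
  | succ k ih =>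
    have h := Ring.choose_succ_succ (-1 : ℤ) k
    rw [neg_add_cancel, Ring.choose_zero_succ] at h
    have : Ring.choose (-1 : ℤ) (k + 1) = -Ring.choose (-1 : ℤ) k := by linarith
    rw [this, ih]; ring

lemma ringChoose_neg_two (n : ℕ) : Ring.choose (-2 : ℤ) n = (-1) ^ n * (n + 1) := by
  induction n with
  | zero => simp [Ring.choose_zero_right]
  | succ n ih =>
    have h := Ring.choose_succ_succ (-2 : ℤ) n
    have h2 : (-2 : ℤ) + 1 = -1 := by ring
    rw [h2, ringChoose_neg_one] at h
    have : Ring.choose (-2 : ℤ) (n + 1) = (-1) ^ (n + 1) - Ring.choose (-2 : ℤ) n := by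
      linarith
    rw [this, ih]; push_cast; ring

/-- `e(r, n) = (−1)ⁿ · binom(r − 2, n)`, where `binom` is the generalized binomial
coefficient over `ℤ`. -/
theorem eulerComplement_eq (r n : ℕ) :
    eulerComplement r n = (-1) ^ n * Ring.choose ((r : ℤ) - 2) n := by
  induction r generalizing n with
  | zero =>
    have : ((0 : ℕ) : ℤ) - 2 = -2 := by norm_num
    rw [this, ringChoose_neg_two]
    show ((n : ℤ) + 1) = _
    rw [← mul_assoc, ← mul_pow]
    simp
  | succ r ih =>
    cases n with
    | zero => simp [eulerComplement, Ring.choose_zero_right]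
    | succ n =>
      show eulerComplement r (n + 1) - eulerComplement r n = _
      rw [ih, ih]
      have h : ((r : ℤ) + 1) - 2 = ((r : ℤ) - 2) + 1 := by ring
      have hc : ((↑(r + 1) : ℤ)) - 2 = ((r : ℤ) - 2) + 1 := by push_cast; ring
      rw [hc, Ring.choose_succ_succ]
      ring
end

section
/- (Proposition on orbifold Euler numbers.) Let n ≥ 0 and r ≥ 0 be integers and let m_1,…,m_r be positive integers. Set s_i := 1 − 1/m_i ∈ ℚ. Then the following identity holds in ℚ: Σ_{k=0}^{n} (−1)^{n−k} · binom(r − 2 − k, n − k) · Σ_{B ⊆ {1,…,r}, |B| = k} ∏_{i∈B} (1/m_i) = Σ_{j=0}^{n} (−1)^j · (n + 1 − j) · Σ_{B ⊆ {1,…,r}, |B| = j} ∏_{i∈B} s_i, where binom(m, ℓ) for m ∈ ℤ, ℓ ∈ ℕ denotes the generalized binomial coefficient m(m−1)⋯(m−ℓ+1)/ℓ!. (Both sides equal the orbifold Euler number of an orbifold on ℙ^n whose locus is an arrangement of r hyperplanes in general position with multiplicities m_1,…,m_r.) -/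
/-!
Write `e_k(x)` for the `k`-th elementary symmetric sum of `xᵢ = 1/mᵢ`. Expanding each product
`∏_{i∈B} (1 - xᵢ)` and counting the `j`-sets containing a given `k`-set gives
`e_j(1 - x) = ∑_k (-1)^k binom(r-k, j-k) e_k(x)`. After exchanging the sums, the coefficient of
`e_k(x)` on the right is `∑_{t ≤ n-k} (-1)^t (n-k+1-t) binom(r-k, t)`, and two applications of
Pascal's rule turn this weighted alternating sum into `(-1)^(n-k) binom(r-k-2, n-k)`.
-/

open Finset

section Subsets

variable {ι : Type*} [DecidableEq ι]

lemma card_filter_powersetCard_superset {s A : Finset ι} (hA : A ⊆ s) {j : ℕ} (hj : #A ≤ j) :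
    #{B ∈ s.powersetCard j | A ⊆ B} = (#s - #A).choose (j - #A) := by
  rw [← card_sdiff_of_subset hA, ← card_powersetCard]
  refine card_bij' (fun B _ => B \ A) (fun C _ => C ∪ A) (fun B hB => ?_) (fun C hC => ?_)
    (fun B hB => ?_) (fun C hC => ?_)
  all_goals simp only [mem_filter, mem_powersetCard] at *
  · exact ⟨sdiff_subset_sdiff hB.1.1 subset_rfl, by rw [card_sdiff_of_subset hB.2, hB.1.2]⟩
  · have hdisj : Disjoint C A := disjoint_of_subset_left hC.1 sdiff_disjoint
    refine ⟨⟨union_subset (hC.1.trans sdiff_subset) hA, ?_⟩, subset_union_right⟩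
    rw [card_union_of_disjoint hdisj, hC.2]
    omega
  · exact sdiff_union_of_subset hB.2
  · exact union_sdiff_cancel_right (disjoint_of_subset_left hC.1 sdiff_disjoint)

lemma sum_powersetCard_sum_powersetCard {M : Type*} [AddCommMonoid M] (s : Finset ι)
    (g : Finset ι → M) {k j : ℕ} (hkj : k ≤ j) :
    ∑ B ∈ s.powersetCard j, ∑ A ∈ B.powersetCard k, g A
      = ∑ A ∈ s.powersetCard k, (#s - k).choose (j - k) • g A := by
  rw [sum_comm' (t' := s.powersetCard k) (s' := fun A => {B ∈ s.powersetCard j | A ⊆ B})]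
  · refine sum_congr rfl fun A hA => ?_
    obtain ⟨hAs, rfl⟩ := mem_powersetCard.mp hA
    rw [sum_const, card_filter_powersetCard_superset hAs hkj]
  · intro B A
    simp only [mem_powersetCard, mem_filter]
    grind

variable {R : Type*} [CommRing R]

lemma sum_powersetCard_prod_one_sub (s : Finset ι) (x : ι → R) (j : ℕ) :
    ∑ B ∈ s.powersetCard j, ∏ i ∈ B, (1 - x i)
      = ∑ k ∈ range (j + 1), (-1) ^ k * ((#s - k).choose (j - k) : R) *
          ∑ A ∈ s.powersetCard k, ∏ i ∈ A, x i := by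
  calc ∑ B ∈ s.powersetCard j, ∏ i ∈ B, (1 - x i)
      = ∑ B ∈ s.powersetCard j, ∑ k ∈ range (j + 1), ∑ A ∈ B.powersetCard k,
          (-1) ^ k * ∏ i ∈ A, x i := by
        refine sum_congr rfl fun B hB => ?_
        rw [prod_sub, sum_powerset, (mem_powersetCard.mp hB).2]
        refine sum_congr rfl fun k _ => sum_congr rfl fun A hA => ?_
        rw [(mem_powersetCard.mp hA).2, prod_const_one, mul_one]
    _ = ∑ k ∈ range (j + 1), ∑ B ∈ s.powersetCard j, ∑ A ∈ B.powersetCard k,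
          (-1) ^ k * ∏ i ∈ A, x i := sum_comm
    _ = _ := by
        refine sum_congr rfl fun k hk => ?_
        rw [sum_powersetCard_sum_powersetCard s _ (Nat.lt_succ_iff.mp (mem_range.mp hk)),
          mul_sum]
        refine sum_congr rfl fun A _ => ?_
        rw [nsmul_eq_mul]
        ring

end Subsets

section Binomial

variable {R : Type*} [CommRing R] [BinomialRing R]

lemma Ring.sum_range_neg_one_pow_mul_choose (a : R) (N : ℕ) :
    ∑ t ∈ range (N + 1), (-1) ^ t * Ring.choose a t = (-1) ^ N * Ring.choose (a - 1) N := by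
  induction N with
  | zero => simp
  | succ N ih =>
    have pascal := Ring.choose_succ_succ (a - 1) N
    rw [sub_add_cancel] at pascal
    rw [sum_range_succ, ih, pascal]
    ring

lemma Ring.sum_range_neg_one_pow_mul_sub_mul_choose (a : R) (N : ℕ) :
    ∑ t ∈ range (N + 1), (-1) ^ t * ((N : R) + 1 - t) * Ring.choose a t
      = (-1) ^ N * Ring.choose (a - 2) N := by
  induction N with
  | zero => simp
  | succ N ih =>
    have pascal := Ring.choose_succ_succ (a - 2) N
    rw [show a - 2 + 1 = a - 1 by ring] at pascal
    have weight_split : ∀ t ∈ range (N + 2), (-1) ^ t * ((↑(N + 1) : R) + 1 - t) * Ring.choose a t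
        = (-1) ^ t * ((N : R) + 1 - t) * Ring.choose a t + (-1) ^ t * Ring.choose a t := by
      intro t _
      push_cast
      ring
    rw [sum_congr rfl weight_split, sum_add_distrib, sum_range_succ _ (N + 1), ih,
      Ring.sum_range_neg_one_pow_mul_choose, pascal]
    push_cast
    ring

lemma sum_range_neg_one_pow_mul_sum_choose (N n : ℕ) (e : ℕ → R)
    (he : ∀ k, N < k → e k = 0) :
    ∑ j ∈ range (n + 1), (-1) ^ j * ((n : R) + 1 - j) *
        ∑ k ∈ range (j + 1), (-1) ^ k * ((N - k).choose (j - k) : R) * e k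
      = ∑ k ∈ range (n + 1), (-1) ^ (n - k) * Ring.choose ((N : R) - 2 - k) (n - k) * e k := by
  let f : ℕ → ℕ → R := fun k t => (-1) ^ t * (((n - k : ℕ) : R) + 1 - t) * (N - k).choose t * e k
  calc _ = ∑ j ∈ range (n + 1), ∑ k ∈ range (j + 1), f k (j - k) := by
        refine sum_congr rfl fun j hj => ?_
        rw [mul_sum]
        refine sum_congr rfl fun k hk => ?_
        have hkj : k ≤ j := Nat.lt_succ_iff.mp (mem_range.mp hk)
        have hjn : j ≤ n := Nat.lt_succ_iff.mp (mem_range.mp hj)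
        obtain ⟨t, rfl⟩ := Nat.exists_eq_add_of_le hkj
        have hsign : (-1 : R) ^ (k + t) * (-1) ^ k = (-1) ^ t := by
          rw [pow_add, mul_right_comm, ← pow_add, Even.neg_one_pow ⟨k, rfl⟩, one_mul]
        simp only [f, Nat.add_sub_cancel_left]
        push_cast [show k ≤ n by omega]
        linear_combination ((n : R) + 1 - k - t) * (N - k).choose t * e k * hsign
    _ = ∑ k ∈ range (n + 1), ∑ t ∈ range (n + 1 - k), f k t := sum_range_diag_flip _ _
    _ = _ := by
        refine sum_congr rfl fun k hk => ?_
        have hkn : k ≤ n := Nat.lt_succ_iff.mp (mem_range.mp hk)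
        rcases le_or_gt k N with hkN | hkN
        · have key := Ring.sum_range_neg_one_pow_mul_sub_mul_choose ((N - k : ℕ) : R) (n - k)
          simp only [Ring.choose_natCast] at key
          rw [Nat.cast_sub hkN, sub_right_comm] at key
          rw [show n + 1 - k = n - k + 1 by omega, ← sum_mul, key]
        · simp [f, he k hkN]

end Binomial

theorem orbifold_euler_number_formula_general
    (n r : ℕ) (m : Fin r → ℕ) :
    ∑ k ∈ Finset.range (n + 1),
        (-1 : ℚ) ^ (n - k) * (Ring.choose ((r : ℤ) - 2 - k) (n - k) : ℚ) *
          ∑ B ∈ Finset.powersetCard k (Finset.univ : Finset (Fin r)),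
            ∏ i ∈ B, (1 / (m i : ℚ)) =
      ∑ j ∈ Finset.range (n + 1),
        (-1 : ℚ) ^ j * ((n : ℚ) + 1 - j) *
          ∑ B ∈ Finset.powersetCard j (Finset.univ : Finset (Fin r)),
            ∏ i ∈ B, (1 - 1 / (m i : ℚ)) := by
  have esymm_eq_zero : ∀ k, r < k →
      ∑ B ∈ powersetCard k (univ : Finset (Fin r)), ∏ i ∈ B, (1 / (m i : ℚ)) = 0 := fun k hk => by
    rw [powersetCard_eq_empty.mpr (by simpa using hk), sum_empty]
  simp only [sum_powersetCard_prod_one_sub, card_univ, Fintype.card_fin, Int.cast_natCast]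
  exact (sum_range_neg_one_pow_mul_sum_choose r n _ esymm_eq_zero).symm

/-- Orbifold Euler number identity for an arrangement of `r` hyperplanes in general
position in `ℙⁿ` with multiplicities `m₁, …, m_r`: with `sᵢ := 1 − 1/mᵢ`,
`Σ_{k=0}^{n} (−1)^{n−k} binom(r−2−k, n−k) Σ_{|B|=k} ∏_{i∈B} 1/mᵢ
  = Σ_{j=0}^{n} (−1)^j (n+1−j) Σ_{|B|=j} ∏_{i∈B} sᵢ`. -/
theorem orbifold_euler_number_formula
    (n r : ℕ) (m : Fin r → ℕ) (hm : ∀ i, 0 < m i) :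
    ∑ k ∈ Finset.range (n + 1),
        (-1 : ℚ) ^ (n - k) * (Ring.choose ((r : ℤ) - 2 - k) (n - k) : ℚ) *
          ∑ B ∈ Finset.powersetCard k (Finset.univ : Finset (Fin r)),
            ∏ i ∈ B, (1 / (m i : ℚ)) =
      ∑ j ∈ Finset.range (n + 1),
        (-1 : ℚ) ^ j * ((n : ℚ) + 1 - j) *
          ∑ B ∈ Finset.powersetCard j (Finset.univ : Finset (Fin r)),
            ∏ i ∈ B, (1 - 1 / (m i : ℚ)) :=
  orbifold_euler_number_formula_general n r m
end
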